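/- In a normed plane, Birkhoff orthogonality between boundary points of the unit ball is 'cyclically monotone': if x₁, x₂ ∈ ∂K with x₂ in the open antipode-free arc from x₁ (positive direction), x₁ ⊣ y₁, x₂ ⊣ y₂ with y₁, y₂ ∈ ∂K chosen in the positive direction from x₁, x₂ respectively (within an antipode-free arc), then y₂ lies in the closed arc from y₁ to −x₁. -/

import Mathlib

/-!
If `x ⊣ y` with `cross x y > 0`, the line `x + ℝ y` supports `K`, so `cross z y ≤ cross x y`
for every `z ∈ K`. Applying this to `z = x₂` for the pair `(x₁, y₁)` and to `z = x₁` for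
`(x₂, y₂)` and multiplying, the Plücker identity
`cross x₂ y₁ * cross x₁ y₂ = cross x₁ y₁ * cross x₂ y₂ + cross x₁ x₂ * cross y₂ y₁`
gives `cross x₁ x₂ * cross y₂ y₁ ≤ 0`. As `x₂` lies less than a half-turn after `x₁`,
`cross x₁ x₂ > 0`, so `y₂` cannot lie strictly before `y₁`.
-/

open Set MeasureTheory Pointwise

abbrev Plane := ℝ × ℝ

/-- An origin-symmetric convex body in the plane: compact, convex,
nonempty interior, symmetric about the origin. -/
def IsSymmConvexBody (K : Set Plane) : Prop :=
  Convex ℝ K ∧ IsCompact K ∧ (interior K).Nonempty ∧ K = -K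

/-- Birkhoff orthogonality with respect to the norm induced by `K`
(whose Minkowski functional is `gauge K`). -/
def BOrth (K : Set Plane) (x y : Plane) : Prop :=
  ∀ t : ℝ, gauge K x ≤ gauge K (x + t • y)

/-- The set of Auerbach points of `K`. -/
def Auerbach (K : Set Plane) : Set Plane :=
  {x | x ∈ frontier K ∧ ∃ y ∈ frontier K, BOrth K x y ∧ BOrth K y x}

/-- `E(K)`: the union of the open non-degenerate segments contained in `∂K`. -/
def SegUnion (K : Set Plane) : Set Plane :=
  {x | ∃ a b : Plane, a ≠ b ∧ segment ℝ a b ⊆ frontier K ∧ x ∈ openSegment ℝ a b}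

/-- A closed antipode-free arc of `∂K` with endpoints `x` and `y`:
a closed connected subset of `∂K` containing `x` and `y`, containing no
pair of antipodal points, and minimal with these properties. -/
def IsBArc (K C : Set Plane) (x y : Plane) : Prop :=
  C ⊆ frontier K ∧ IsClosed C ∧ IsPreconnected C ∧ x ∈ C ∧ y ∈ C ∧
  (∀ z ∈ C, -z ∉ C) ∧
  ∀ C' ⊆ C, IsClosed C' → IsPreconnected C' → x ∈ C' → y ∈ C' → C' = C

/-- An angular measure on `∂K`. -/
def IsAngularMeasure (K : Set Plane) (μ : Measure Plane) : Prop :=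
  μ (frontier K) = ENNReal.ofReal (2 * Real.pi) ∧
  μ (frontier K)ᶜ = 0 ∧
  (∀ X : Set Plane, μ (-X) = μ X) ∧
  (∀ x : Plane, μ {x} = 0)

/-- A B-measure: an angular measure giving `π/2` to every closed
antipode-free arc whose endpoints are Birkhoff orthogonal. -/
def IsBMeasure (K : Set Plane) (μ : Measure Plane) : Prop :=
  IsAngularMeasure K μ ∧
  ∀ C x y, IsBArc K C x y → BOrth K x y → μ C = ENNReal.ofReal (Real.pi / 2)

/-- The support of a Borel measure: the points all of whose open
neighborhoods have positive measure. -/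
def msupp {α : Type*} [TopologicalSpace α] [MeasurableSpace α]
    (μ : Measure α) : Set α :=
  {x | ∀ U : Set α, IsOpen U → x ∈ U → 0 < μ U}

/-- The point of `∂K` at polar angle `θ`. -/
noncomputable def bpt (K : Set Plane) (θ : ℝ) : Plane :=
  (gauge K (Real.cos θ, Real.sin θ))⁻¹ • ((Real.cos θ, Real.sin θ) : Plane)

open Real

def cross (v w : Plane) : ℝ := v.1 * w.2 - v.2 * w.1

lemma cross_smul_eq_add (x y z : Plane) : cross x y • z = cross z y • x + cross x z • y := by
  ext <;> simp only [cross, Prod.smul_fst, Prod.smul_snd, Prod.fst_add, Prod.snd_add,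
    smul_eq_mul] <;> ring

lemma cross_mul_cross_eq (x₁ x₂ y₁ y₂ : Plane) :
    cross x₂ y₁ * cross x₁ y₂ = cross x₁ y₁ * cross x₂ y₂ + cross x₁ x₂ * cross y₂ y₁ := by
  simp only [cross]; ring

lemma BOrth.cross_le {K : Set Plane} {x y z : Plane} (hx : gauge K x = 1) (hxy : BOrth K x y)
    (hz : z ∈ K) (hpos : 0 < cross x y) : cross z y ≤ cross x y := by
  by_contra! hlt
  have hzy : 0 < cross z y := hpos.trans hlt
  have hline : (cross x y / cross z y) • z = x + (cross x z / cross z y) • y := by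
    rw [div_eq_inv_mul, div_eq_inv_mul, mul_smul, mul_smul, cross_smul_eq_add, smul_add,
      inv_smul_smul₀ hzy.ne']
  have hge : 1 ≤ gauge K ((cross x y / cross z y) • z) := hline ▸ hx ▸ hxy _
  have hle : gauge K ((cross x y / cross z y) • z) ≤ cross x y / cross z y := by
    rw [gauge_smul_of_nonneg (div_pos hpos hzy).le, smul_eq_mul]
    exact mul_le_of_le_one_right (div_pos hpos hzy).le (gauge_le_one_of_mem hz)
  linarith [(div_lt_one hzy).2 hlt]

lemma cross_mul_cross_nonpos_of_bOrth {K : Set Plane} {x₁ x₂ y₁ y₂ : Plane}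
    (hx₁ : gauge K x₁ = 1) (hx₂ : gauge K x₂ = 1) (hx₁K : x₁ ∈ K) (hx₂K : x₂ ∈ K)
    (hb₁ : BOrth K x₁ y₁) (hb₂ : BOrth K x₂ y₂) (h₁ : 0 < cross x₁ y₁) (h₂ : 0 < cross x₂ y₂)
    (h₁₂ : 0 ≤ cross x₁ y₂) : cross x₁ x₂ * cross y₂ y₁ ≤ 0 := by
  have := mul_le_mul (hb₁.cross_le hx₁ hx₂K h₁) (hb₂.cross_le hx₂ hx₁K h₂) h₁₂ h₁.le
  linarith [cross_mul_cross_eq x₁ x₂ y₁ y₂]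

lemma cross_bpt (K : Set Plane) (α β : ℝ) :
    cross (bpt K α) (bpt K β) =
      (gauge K (cos α, sin α))⁻¹ * (gauge K (cos β, sin β))⁻¹ * sin (β - α) := by
  simp only [cross, bpt, Prod.smul_fst, Prod.smul_snd, smul_eq_mul, sin_sub]
  ring

lemma cos_sin_ne_zero (θ : ℝ) : ((cos θ, sin θ) : Plane) ≠ 0 := fun h => by
  have := sin_sq_add_cos_sq θ
  simp_all [Prod.ext_iff]

namespace IsSymmConvexBody

variable {K : Set Plane}

lemma zero_mem_interior (hK : IsSymmConvexBody K) : (0 : Plane) ∈ interior K := by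
  obtain ⟨hconv, -, ⟨p, hp⟩, hsymm⟩ := hK
  have hneg : -p ∈ interior K := by
    have h : interior (-K) = -interior K := ((Homeomorph.neg Plane).preimage_interior K).symm
    rwa [hsymm, h, Set.neg_mem_neg]
  simpa using hconv.interior hp hneg (by norm_num : (0 : ℝ) ≤ 1 / 2)
    (by norm_num : (0 : ℝ) ≤ 1 / 2) (by norm_num)

lemma gauge_pos (hK : IsSymmConvexBody K) {v : Plane} (hv : v ≠ 0) : 0 < gauge K v :=
  (_root_.gauge_pos (absorbent_nhds_zero (mem_interior_iff_mem_nhds.1 hK.zero_mem_interior))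
    (NormedSpace.isVonNBounded_iff ℝ |>.2 hK.2.1.isBounded)).2 hv

lemma gauge_bpt (hK : IsSymmConvexBody K) (θ : ℝ) : gauge K (bpt K θ) = 1 := by
  have hr := hK.gauge_pos (cos_sin_ne_zero θ)
  rw [bpt, gauge_smul_of_nonneg (inv_nonneg.2 hr.le), smul_eq_mul, inv_mul_cancel₀ hr.ne']

lemma bpt_mem (hK : IsSymmConvexBody K) (θ : ℝ) : bpt K θ ∈ K := by
  have h := (gauge_le_one_iff_mem_closure hK.1
    (mem_interior_iff_mem_nhds.1 hK.zero_mem_interior)).1 (hK.gauge_bpt θ).le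
  rwa [hK.2.1.isClosed.closure_eq] at h

lemma cross_bpt_pos (hK : IsSymmConvexBody K) {α β : ℝ} (h : 0 < β - α) (h' : β - α < π) :
    0 < cross (bpt K α) (bpt K β) := by
  rw [cross_bpt]
  have := hK.gauge_pos (cos_sin_ne_zero α)
  have := hK.gauge_pos (cos_sin_ne_zero β)
  have := sin_pos_of_pos_of_lt_pi h h'
  positivity

end IsSymmConvexBody

theorem stmt_19_general (K : Set Plane) (hK : IsSymmConvexBody K)
    (θ₁ θ₂ s₁ s₂ : ℝ) (h12 : θ₁ < θ₂)
    (hs₁ : s₁ ∈ Ioo θ₁ (θ₁ + Real.pi)) (hs₂ : s₂ ∈ Ioo θ₂ (θ₁ + Real.pi))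
    (hb1 : BOrth K (bpt K θ₁) (bpt K s₁))
    (hb2 : BOrth K (bpt K θ₂) (bpt K s₂)) :
    s₂ ∈ Icc s₁ (θ₁ + Real.pi) := by
  obtain ⟨hθs₁, hs₁π⟩ := hs₁
  obtain ⟨hθs₂, hs₂π⟩ := hs₂
  refine ⟨?_, hs₂π.le⟩
  by_contra! hlt
  have hx : 0 < cross (bpt K θ₁) (bpt K θ₂) := hK.cross_bpt_pos (by linarith) (by linarith)
  have hy : 0 < cross (bpt K s₂) (bpt K s₁) := hK.cross_bpt_pos (by linarith) (by linarith)
  have h₁ : 0 < cross (bpt K θ₁) (bpt K s₁) := hK.cross_bpt_pos (by linarith) (by linarith)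
  have h₂ : 0 < cross (bpt K θ₂) (bpt K s₂) := hK.cross_bpt_pos (by linarith) (by linarith)
  have h₁₂ : 0 < cross (bpt K θ₁) (bpt K s₂) := hK.cross_bpt_pos (by linarith) (by linarith)
  have := cross_mul_cross_nonpos_of_bOrth (hK.gauge_bpt θ₁) (hK.gauge_bpt θ₂) (hK.bpt_mem θ₁)
    (hK.bpt_mem θ₂) hb1 hb2 h₁ h₂ h₁₂.le
  linarith [mul_pos hx hy]

/-- Cyclic monotonicity of Birkhoff orthogonality: if `x₂ = bpt θ₂` lies in
the open antipode-free arc past `x₁ = bpt θ₁`, and `y₁ = bpt s₁`, `y₂ = bpt s₂`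
are Birkhoff-orthogonal partners chosen in the positive direction within the
antipode-free arc, then `y₂` lies in the closed arc from `y₁` to `-x₁`. -/
theorem stmt_19 (K : Set Plane) (hK : IsSymmConvexBody K)
    (θ₁ θ₂ s₁ s₂ : ℝ) (h12 : θ₁ < θ₂) (h2pi : θ₂ < θ₁ + Real.pi)
    (hs₁ : s₁ ∈ Ioo θ₁ (θ₁ + Real.pi)) (hs₂ : s₂ ∈ Ioo θ₂ (θ₁ + Real.pi))
    (hb1 : BOrth K (bpt K θ₁) (bpt K s₁))
    (hb2 : BOrth K (bpt K θ₂) (bpt K s₂)) :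
    s₂ ∈ Icc s₁ (θ₁ + Real.pi) :=
  stmt_19_general K hK θ₁ θ₂ s₁ s₂ h12 hs₁ hs₂ hb1 hb2
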